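/- The linear span of the union of all the subspaces W_k (k ∈ ℕ), V¹_{l,r} (l ∈ ℕ, r ≥ 1) and V²_{p,s} (p ∈ ℕ, s ≥ 1) is dense in A. In particular every spanning element S_μ (S_ν)⋆ lies in this linear span: if |μ| = |ν| it lies in Span(∪_k W_k); if |μ| > |ν| it lies in Span(∪ V¹_{k,r}); if |μ| < |ν| it lies in Span(∪ V²_{k,r}). -/

import Mathlib

/-!
In a C*-algebra the Cuntz relations force `S_i⋆ S_j = 0` for `i ≠ j`: conjugating
`∑ S_k S_k⋆ = 1` by `S_i` writes `1` as `1 + ∑_{k ≠ i} x_k x_k⋆` with `x_k = S_i⋆ S_k`, and a sum of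
positive elements vanishes only if every term does. Hence `S_α⋆ S_β = δ_{αβ}` for words of equal
length, and the functional `φ` satisfies
`φ(y⋆ S_{μa} S_{νb}⋆) = (δ_{ab} / n) φ(y⋆ S_μ S_ν⋆)` for `y ∈ F_k`, `|μ| = |ν| = k`.
So `S_{μa} S_{νb}⋆ - (δ_{ab} / n) S_μ S_ν⋆ ∈ W_{k+1}`, and induction on the length puts every
`S_μ S_ν⋆` with `|μ| = |ν|` in `Span(∪ W_k)`. When the lengths differ, splitting off a prefix of
`μ` (or of `ν`) of length `||μ| - |ν||` reduces to this case, and density follows from `hdense`.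
-/

open scoped ComplexOrder

noncomputable section

/-- The product `S_{μ₁} ⋯ S_{μ_p}` along a word `μ` (with `S_μ = 1` for the empty word). -/
def wordProd {A : Type*} [Monoid A] {n : ℕ} (S : Fin n → A) (μ : List (Fin n)) : A :=
  (μ.map S).prod

/-- `B_{r,s} = Span { S_μ S_ν⋆ : |μ| = r, |ν| = s }`;  `F_k = B_{k,k}`. -/
def Bspan {A : Type*} [Ring A] [Algebra ℂ A] [StarRing A] {n : ℕ}
    (S : Fin n → A) (r s : ℕ) : Submodule ℂ A :=
  Submodule.span ℂ
    {a | ∃ μ ν : List (Fin n), μ.length = r ∧ ν.length = s ∧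
        a = wordProd S μ * star (wordProd S ν)}

/-- `W_0 = ℂ·1` and, for `k ≥ 1`,
`W_k = {x ∈ F_k : φ(y⋆ x) = 0 for all y ∈ F_{k-1}}`. -/
def Wsub {A : Type*} [NormedRing A] [NormedAlgebra ℂ A] [StarRing A] {n : ℕ}
    (φ : A →L[ℂ] ℂ) (S : Fin n → A) : ℕ → Submodule ℂ A
  | 0 => Submodule.span ℂ {(1 : A)}
  | (k + 1) =>
      Bspan S (k + 1) (k + 1) ⊓
        ⨅ y ∈ Bspan S k k,
          LinearMap.ker ((φ : A →ₗ[ℂ] ℂ) ∘ₗ LinearMap.mulLeft ℂ (star y))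

/-- `V¹_{k,r} = Span { S_μ x : |μ| = r, x ∈ W_k }`. -/
def V1 {A : Type*} [NormedRing A] [NormedAlgebra ℂ A] [StarRing A] {n : ℕ}
    (φ : A →L[ℂ] ℂ) (S : Fin n → A) (k r : ℕ) : Submodule ℂ A :=
  Submodule.span ℂ
    {a | ∃ μ : List (Fin n), ∃ x : A, μ.length = r ∧ x ∈ Wsub φ S k ∧
        a = wordProd S μ * x}

/-- `V²_{k,r} = Span { x S_γ⋆ : |γ| = r, x ∈ W_k }`. -/
def V2 {A : Type*} [NormedRing A] [NormedAlgebra ℂ A] [StarRing A] {n : ℕ}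
    (φ : A →L[ℂ] ℂ) (S : Fin n → A) (k r : ℕ) : Submodule ℂ A :=
  Submodule.span ℂ
    {a | ∃ γ : List (Fin n), ∃ x : A, γ.length = r ∧ x ∈ Wsub φ S k ∧
        a = x * star (wordProd S γ)}

theorem star_mul_eq_zero_of_ne {A : Type*} [CStarAlgebra A] {n : ℕ} {S : Fin n → A}
    (hS1 : ∀ i, star (S i) * S i = 1) (hS2 : ∑ j, S j * star (S j) = 1)
    {i j : Fin n} (hij : i ≠ j) : star (S i) * S j = 0 := by
  let := CStarAlgebra.spectralOrder A
  have := CStarAlgebra.spectralOrderedRing A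
  set x : Fin n → A := fun k => star (S i) * S k
  have hsum : ∑ k, x k * star (x k) = 1 := by
    calc ∑ k, x k * star (x k) = star (S i) * (∑ k, S k * star (S k)) * S i := by
          simp only [x, star_mul, star_star, Finset.mul_sum, Finset.sum_mul, mul_assoc]
      _ = 1 := by rw [hS2, mul_one, hS1]
  have hxi : x i * star (x i) = 1 := by simp only [x, hS1, star_one, mul_one]
  have hrest : ∑ k ∈ Finset.univ.erase i, x k * star (x k) = 0 := by
    rw [← Finset.add_sum_erase _ _ (Finset.mem_univ i), hxi] at hsum
    exact add_eq_left.mp hsum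
  rw [Finset.sum_eq_zero_iff_of_nonneg fun k _ => mul_star_self_nonneg (x k)] at hrest
  exact (CStarRing.mul_star_self_eq_zero_iff _).mp
    (hrest j (Finset.mem_erase.mpr ⟨hij.symm, Finset.mem_univ j⟩))

section WordProd

variable {A : Type*} {n : ℕ} (S : Fin n → A)

@[simp]
theorem wordProd_nil [Monoid A] : wordProd S [] = 1 := rfl

@[simp]
theorem wordProd_append [Monoid A] (μ ν : List (Fin n)) :
    wordProd S (μ ++ ν) = wordProd S μ * wordProd S ν := by
  simp [wordProd]

@[simp]
theorem wordProd_singleton [Monoid A] (i : Fin n) : wordProd S [i] = S i := by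
  simp [wordProd]

variable {S} [Ring A] [StarRing A]

theorem star_wordProd_mul_wordProd (hS1 : ∀ i, star (S i) * S i = 1)
    (horth : ∀ i j, i ≠ j → star (S i) * S j = 0) :
    ∀ {α β : List (Fin n)}, α.length = β.length →
      star (wordProd S α) * wordProd S β = if α = β then 1 else 0
  | [], [], _ => by simp
  | a :: α, b :: β, h => by
    have hrec := star_wordProd_mul_wordProd hS1 horth (α := α) (β := β) (by simpa using h)
    have hsplit : star (wordProd S (a :: α)) * wordProd S (b :: β)
        = star (wordProd S α) * (star (S a) * S b) * wordProd S β := by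
      simp only [wordProd, List.map_cons, List.prod_cons, star_mul, mul_assoc]
    rw [hsplit]
    by_cases hab : a = b
    · subst hab
      rw [hS1, mul_one, hrec]
      simp
    · rw [horth a b hab]
      simp [hab]

theorem star_wordProd_mul_star_mul_wordProd_append (hS1 : ∀ i, star (S i) * S i = 1)
    (horth : ∀ i j, i ≠ j → star (S i) * S j = 0) {α μ : List (Fin n)}
    (h : α.length = μ.length) (β γ ν : List (Fin n)) :
    star (wordProd S α * star (wordProd S β)) * (wordProd S (μ ++ γ) * star (wordProd S ν))
      = if α = μ then wordProd S (β ++ γ) * star (wordProd S ν) else 0 := by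
  have hassoc : star (wordProd S α * star (wordProd S β)) *
      (wordProd S (μ ++ γ) * star (wordProd S ν))
      = wordProd S β * (star (wordProd S α) * wordProd S μ) * wordProd S γ *
        star (wordProd S ν) := by
    simp only [star_mul, star_star, wordProd_append, mul_assoc]
  rw [hassoc, star_wordProd_mul_wordProd hS1 horth h]
  split_ifs <;> simp [mul_assoc]

theorem wordProd_mul_star_eq_sum (hS2 : ∑ j, S j * star (S j) = 1) (μ ν : List (Fin n)) :
    wordProd S μ * star (wordProd S ν)
      = ∑ j, wordProd S (μ ++ [j]) * star (wordProd S (ν ++ [j])) := by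
  calc wordProd S μ * star (wordProd S ν)
      = wordProd S μ * (∑ j, S j * star (S j)) * star (wordProd S ν) := by rw [hS2, mul_one]
    _ = _ := by
      simp only [Finset.mul_sum, Finset.sum_mul, wordProd_append, wordProd_singleton, star_mul,
        mul_assoc]

end WordProd

theorem Bspan_le_succ {A : Type*} [Ring A] [Algebra ℂ A] [StarRing A] {n : ℕ} {S : Fin n → A}
    (hS2 : ∑ j, S j * star (S j) = 1) (k : ℕ) : Bspan S k k ≤ Bspan S (k + 1) (k + 1) := by
  rw [Bspan, Submodule.span_le]
  rintro _ ⟨μ, ν, rfl, hν, rfl⟩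
  rw [wordProd_mul_star_eq_sum hS2]
  exact Submodule.sum_mem _ fun j _ =>
    Submodule.subset_span ⟨μ ++ [j], ν ++ [j], by simp, by simp [hν], rfl⟩

section Filtration

variable {A : Type*} [NormedRing A] [StarRing A] [NormedAlgebra ℂ A] {n : ℕ} {S : Fin n → A}
  {φ : A →L[ℂ] ℂ}

theorem mem_Wsub_succ [StarModule ℂ A] {k : ℕ} {x : A} (hx : x ∈ Bspan S (k + 1) (k + 1))
    (hker : ∀ α β : List (Fin n), α.length = k → β.length = k →
      φ (star (wordProd S α * star (wordProd S β)) * x) = 0) :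
    x ∈ Wsub φ S (k + 1) := by
  refine Submodule.mem_inf.mpr ⟨hx, Submodule.mem_iInf _ |>.mpr fun y =>
    Submodule.mem_iInf _ |>.mpr fun hy => ?_⟩
  simp only [LinearMap.mem_ker, LinearMap.comp_apply, LinearMap.mulLeft_apply,
    ContinuousLinearMap.coe_coe]
  induction hy using Submodule.span_induction with
  | mem y hy =>
    obtain ⟨α, β, hα, hβ, rfl⟩ := hy
    exact hker α β hα hβ
  | zero => simp
  | add y z _ _ hy hz => rw [star_add, add_mul, map_add, hy, hz, add_zero]
  | smul c y _ hy => rw [star_smul, smul_mul_assoc, map_smul, hy, smul_zero]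

theorem phi_star_mul_wordProd_concat (hS1 : ∀ i, star (S i) * S i = 1)
    (horth : ∀ i j, i ≠ j → star (S i) * S j = 0)
    (hφ : ∀ μ ν : List (Fin n),
      φ (wordProd S μ * star (wordProd S ν)) =
        if μ = ν then ((n : ℂ) ^ μ.length)⁻¹ else 0)
    {α β μ ν : List (Fin n)} (hα : α.length = μ.length) (hβ : β.length = ν.length)
    (a b : Fin n) :
    φ (star (wordProd S α * star (wordProd S β)) *
        (wordProd S (μ ++ [a]) * star (wordProd S (ν ++ [b]))))
      = (if a = b then (n : ℂ)⁻¹ else 0) *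
        φ (star (wordProd S α * star (wordProd S β)) * (wordProd S μ * star (wordProd S ν))) := by
  have hμ := star_wordProd_mul_star_mul_wordProd_append hS1 horth hα β [] ν
  rw [List.append_nil, List.append_nil] at hμ
  rw [hμ, star_wordProd_mul_star_mul_wordProd_append hS1 horth hα]
  by_cases hαμ : α = μ
  · rw [if_pos hαμ, if_pos hαμ]
    have hconcat : β ++ [a] = ν ++ [b] ↔ β = ν ∧ a = b :=
      ⟨fun h => by simpa using List.append_inj h hβ, by rintro ⟨rfl, rfl⟩; rfl⟩
    rw [hφ, hφ]
    by_cases hab : a = b <;> by_cases hβν : β = ν <;> simp [hconcat, hab, hβν, pow_succ, mul_comm]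
  · simp [hαμ]

theorem wordProd_concat_mul_star_sub_mem_Wsub [StarModule ℂ A]
    (hS1 : ∀ i, star (S i) * S i = 1) (hS2 : ∑ j, S j * star (S j) = 1)
    (horth : ∀ i j, i ≠ j → star (S i) * S j = 0)
    (hφ : ∀ μ ν : List (Fin n),
      φ (wordProd S μ * star (wordProd S ν)) =
        if μ = ν then ((n : ℂ) ^ μ.length)⁻¹ else 0)
    {μ ν : List (Fin n)} (h : μ.length = ν.length) (a b : Fin n) :
    wordProd S (μ ++ [a]) * star (wordProd S (ν ++ [b]))
        - (if a = b then (n : ℂ)⁻¹ else 0) • (wordProd S μ * star (wordProd S ν))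
      ∈ Wsub φ S (μ.length + 1) := by
  refine mem_Wsub_succ (Submodule.sub_mem _ ?_ (Submodule.smul_mem _ _ ?_)) fun α β hα hβ => ?_
  · exact Submodule.subset_span ⟨μ ++ [a], ν ++ [b], by simp, by simp [h], rfl⟩
  · exact Bspan_le_succ hS2 _ (Submodule.subset_span ⟨μ, ν, rfl, h.symm, rfl⟩)
  · rw [mul_sub, map_sub, mul_smul_comm, map_smul, smul_eq_mul,
      phi_star_mul_wordProd_concat hS1 horth hφ hα (hβ.trans h) a b, sub_self]

theorem wordProd_mul_star_mem_span_Wsub [StarModule ℂ A]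
    (hS1 : ∀ i, star (S i) * S i = 1) (hS2 : ∑ j, S j * star (S j) = 1)
    (horth : ∀ i j, i ≠ j → star (S i) * S j = 0)
    (hφ : ∀ μ ν : List (Fin n),
      φ (wordProd S μ * star (wordProd S ν)) =
        if μ = ν then ((n : ℂ) ^ μ.length)⁻¹ else 0)
    {μ ν : List (Fin n)} (h : μ.length = ν.length) :
    wordProd S μ * star (wordProd S ν) ∈ Submodule.span ℂ (⋃ k, (Wsub φ S k : Set A)) := by
  induction μ using List.reverseRecOn generalizing ν with
  | nil =>
    obtain rfl := List.eq_nil_of_length_eq_zero h.symm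
    refine Submodule.subset_span (Set.mem_iUnion.mpr ⟨0, ?_⟩)
    simp [Wsub]
  | append_singleton μ a ih =>
    obtain rfl | ⟨ν, b, rfl⟩ := List.eq_nil_or_concat' ν
    · simp at h
    · have hμν : μ.length = ν.length := by simpa using h
      rw [← sub_add_cancel (wordProd S (μ ++ [a]) * star (wordProd S (ν ++ [b])))
        ((if a = b then (n : ℂ)⁻¹ else 0) • (wordProd S μ * star (wordProd S ν)))]
      exact Submodule.add_mem _
        (Submodule.subset_span (Set.mem_iUnion.mpr
          ⟨_, wordProd_concat_mul_star_sub_mem_Wsub hS1 hS2 horth hφ hμν a b⟩))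
        (Submodule.smul_mem _ _ (ih hμν))


theorem wordProd_mul_mem_span_V1 {γ : List (Fin n)} (hγ : 1 ≤ γ.length) {x : A}
    (hx : x ∈ Submodule.span ℂ (⋃ k, (Wsub φ S k : Set A))) :
    wordProd S γ * x ∈
      Submodule.span ℂ (⋃ l, ⋃ r, ⋃ _ : 1 ≤ r, (V1 φ S l r : Set A)) := by
  have hmap := Submodule.mem_map_of_mem (f := LinearMap.mulLeft ℂ (wordProd S γ)) hx
  rw [Submodule.map_span] at hmap
  refine Submodule.span_mono ?_ hmap
  rintro _ ⟨y, hy, rfl⟩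
  obtain ⟨k, hk⟩ := Set.mem_iUnion.mp hy
  simp only [Set.mem_iUnion]
  exact ⟨k, γ.length, hγ, Submodule.subset_span ⟨γ, y, rfl, hk, rfl⟩⟩

theorem mul_star_wordProd_mem_span_V2 {γ : List (Fin n)} (hγ : 1 ≤ γ.length) {x : A}
    (hx : x ∈ Submodule.span ℂ (⋃ k, (Wsub φ S k : Set A))) :
    x * star (wordProd S γ) ∈
      Submodule.span ℂ (⋃ p, ⋃ s, ⋃ _ : 1 ≤ s, (V2 φ S p s : Set A)) := by
  have hmap := Submodule.mem_map_of_mem (f := LinearMap.mulRight ℂ (star (wordProd S γ))) hx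
  rw [Submodule.map_span] at hmap
  refine Submodule.span_mono ?_ hmap
  rintro _ ⟨y, hy, rfl⟩
  obtain ⟨k, hk⟩ := Set.mem_iUnion.mp hy
  simp only [Set.mem_iUnion]
  exact ⟨k, γ.length, hγ, Submodule.subset_span ⟨γ, y, rfl, hk, rfl⟩⟩

theorem wordProd_mul_star_mem_span_V1 [StarModule ℂ A]
    (hS1 : ∀ i, star (S i) * S i = 1) (hS2 : ∑ j, S j * star (S j) = 1)
    (horth : ∀ i j, i ≠ j → star (S i) * S j = 0)
    (hφ : ∀ μ ν : List (Fin n),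
      φ (wordProd S μ * star (wordProd S ν)) =
        if μ = ν then ((n : ℂ) ^ μ.length)⁻¹ else 0)
    {μ ν : List (Fin n)} (h : ν.length < μ.length) :
    wordProd S μ * star (wordProd S ν) ∈
      Submodule.span ℂ (⋃ l, ⋃ r, ⋃ _ : 1 ≤ r, (V1 φ S l r : Set A)) := by
  obtain ⟨μ₁, μ₂, rfl, hμ₂⟩ : ∃ μ₁ μ₂, μ = μ₁ ++ μ₂ ∧ μ₂.length = ν.length :=
    ⟨μ.take (μ.length - ν.length), μ.drop (μ.length - ν.length), (μ.take_append_drop _).symm,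
      by simp; omega⟩
  rw [wordProd_append, mul_assoc]
  exact wordProd_mul_mem_span_V1 (by simp at h; omega)
    (wordProd_mul_star_mem_span_Wsub hS1 hS2 horth hφ hμ₂)

theorem wordProd_mul_star_mem_span_V2 [StarModule ℂ A]
    (hS1 : ∀ i, star (S i) * S i = 1) (hS2 : ∑ j, S j * star (S j) = 1)
    (horth : ∀ i j, i ≠ j → star (S i) * S j = 0)
    (hφ : ∀ μ ν : List (Fin n),
      φ (wordProd S μ * star (wordProd S ν)) =
        if μ = ν then ((n : ℂ) ^ μ.length)⁻¹ else 0)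
    {μ ν : List (Fin n)} (h : μ.length < ν.length) :
    wordProd S μ * star (wordProd S ν) ∈
      Submodule.span ℂ (⋃ p, ⋃ s, ⋃ _ : 1 ≤ s, (V2 φ S p s : Set A)) := by
  obtain ⟨ν₁, ν₂, rfl, hν₂⟩ : ∃ ν₁ ν₂, ν = ν₁ ++ ν₂ ∧ ν₂.length = μ.length :=
    ⟨ν.take (ν.length - μ.length), ν.drop (ν.length - μ.length), (ν.take_append_drop _).symm,
      by simp; omega⟩
  rw [wordProd_append, star_mul, ← mul_assoc]
  exact mul_star_wordProd_mem_span_V2 (by simp at h; omega)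
    (wordProd_mul_star_mem_span_Wsub hS1 hS2 horth hφ hν₂.symm)

end Filtration

theorem filtration_span_dense_general
    {A : Type*} [NormedRing A] [StarRing A] [CStarRing A]
    [NormedAlgebra ℂ A] [StarModule ℂ A] [CompleteSpace A]
    {n : ℕ} (S : Fin n → A)
    (hS1 : ∀ i, star (S i) * S i = 1)
    (hS2 : ∑ j, S j * star (S j) = 1)
    (hdense :
      (Submodule.span ℂ
        {a | ∃ μ ν : List (Fin n),
            a = wordProd S μ * star (wordProd S ν)}).topologicalClosure = ⊤)
    (φ : A →L[ℂ] ℂ)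
    (hφ : ∀ μ ν : List (Fin n),
      φ (wordProd S μ * star (wordProd S ν)) =
        if μ = ν then ((n : ℂ) ^ μ.length)⁻¹ else 0) :
    (Submodule.span ℂ
        ((⋃ k : ℕ, (Wsub φ S k : Set A)) ∪
          (⋃ l : ℕ, ⋃ r : ℕ, ⋃ _ : 1 ≤ r, (V1 φ S l r : Set A)) ∪
          (⋃ p : ℕ, ⋃ s : ℕ, ⋃ _ : 1 ≤ s, (V2 φ S p s : Set A)))).topologicalClosure
      = ⊤ ∧
    (∀ μ ν : List (Fin n),
      (μ.length = ν.length →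
        wordProd S μ * star (wordProd S ν) ∈
          Submodule.span ℂ (⋃ k : ℕ, (Wsub φ S k : Set A))) ∧
      (ν.length < μ.length →
        wordProd S μ * star (wordProd S ν) ∈
          Submodule.span ℂ
            (⋃ l : ℕ, ⋃ r : ℕ, ⋃ _ : 1 ≤ r, (V1 φ S l r : Set A))) ∧
      (μ.length < ν.length →
        wordProd S μ * star (wordProd S ν) ∈
          Submodule.span ℂ
            (⋃ p : ℕ, ⋃ s : ℕ, ⋃ _ : 1 ≤ s, (V2 φ S p s : Set A)))) := by
  have horth : ∀ i j, i ≠ j → star (S i) * S j = 0 := by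
    let _ : CStarAlgebra A := {}
    exact fun i j => star_mul_eq_zero_of_ne hS1 hS2
  have hW {μ ν : List (Fin n)} := wordProd_mul_star_mem_span_Wsub (μ := μ) (ν := ν) hS1 hS2 horth hφ
  have hV1 {μ ν : List (Fin n)} := wordProd_mul_star_mem_span_V1 (μ := μ) (ν := ν) hS1 hS2 horth hφ
  have hV2 {μ ν : List (Fin n)} := wordProd_mul_star_mem_span_V2 (μ := μ) (ν := ν) hS1 hS2 horth hφ
  refine ⟨?_, fun μ ν => ⟨hW, hV1, hV2⟩⟩
  rw [← top_le_iff, ← hdense]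
  refine Submodule.topologicalClosure_mono (Submodule.span_le.mpr ?_)
  rintro _ ⟨μ, ν, rfl⟩
  rcases lt_trichotomy μ.length ν.length with h | h | h
  · exact Submodule.span_mono Set.subset_union_right (hV2 h)
  · exact Submodule.span_mono (Set.subset_union_left.trans Set.subset_union_left) (hW h)
  · exact Submodule.span_mono (Set.subset_union_right.trans Set.subset_union_left) (hV1 h)

/-- The linear span of the union of all the `W_k` (`k ∈ ℕ`),
`V¹_{l,r}` (`l ∈ ℕ`, `r ≥ 1`) and `V²_{p,s}` (`p ∈ ℕ`, `s ≥ 1`) is dense in `A`.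
In particular every spanning element `S_μ S_ν⋆` lies in this linear span:
if `|μ| = |ν|` it lies in `Span(∪_k W_k)`, if `|μ| > |ν|` in `Span(∪ V¹_{k,r})`,
and if `|μ| < |ν|` in `Span(∪ V²_{k,r})`. -/
theorem filtration_span_dense
    {A : Type*} [NormedRing A] [StarRing A] [CStarRing A]
    [NormedAlgebra ℂ A] [StarModule ℂ A] [CompleteSpace A]
    {n : ℕ} (hn : 2 ≤ n) (S : Fin n → A)
    (hS1 : ∀ i, star (S i) * S i = 1)
    (hS2 : ∑ j, S j * star (S j) = 1)
    (hdense :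
      (Submodule.span ℂ
        {a | ∃ μ ν : List (Fin n),
            a = wordProd S μ * star (wordProd S ν)}).topologicalClosure = ⊤)
    (φ : A →L[ℂ] ℂ)
    (hφ : ∀ μ ν : List (Fin n),
      φ (wordProd S μ * star (wordProd S ν)) =
        if μ = ν then ((n : ℂ) ^ μ.length)⁻¹ else 0) :
    (Submodule.span ℂ
        ((⋃ k : ℕ, (Wsub φ S k : Set A)) ∪
          (⋃ l : ℕ, ⋃ r : ℕ, ⋃ _ : 1 ≤ r, (V1 φ S l r : Set A)) ∪
          (⋃ p : ℕ, ⋃ s : ℕ, ⋃ _ : 1 ≤ s, (V2 φ S p s : Set A)))).topologicalClosure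
      = ⊤ ∧
    (∀ μ ν : List (Fin n),
      (μ.length = ν.length →
        wordProd S μ * star (wordProd S ν) ∈
          Submodule.span ℂ (⋃ k : ℕ, (Wsub φ S k : Set A))) ∧
      (ν.length < μ.length →
        wordProd S μ * star (wordProd S ν) ∈
          Submodule.span ℂ
            (⋃ l : ℕ, ⋃ r : ℕ, ⋃ _ : 1 ≤ r, (V1 φ S l r : Set A))) ∧
      (μ.length < ν.length →
        wordProd S μ * star (wordProd S ν) ∈
          Submodule.span ℂ
            (⋃ p : ℕ, ⋃ s : ℕ, ⋃ _ : 1 ≤ s, (V2 φ S p s : Set A)))) :=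
  filtration_span_dense_general S hS1 hS2 hdense φ hφ
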